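/- Let L be a Z_p-Lie algebra acting on M via ψ with action length d < p, and G = exp(L) the corresponding group via the truncated BCH multiplication, acting via exp(ψ). Then the coinvariants agree: M/[M,L] = M/[M,G], i.e. the submodules [M,L] = Span{ψ(a)m} and [M,G] = Span{m - exp(ψ)(a)m} of M are equal. Hence H_0 of the Lie action and H_0 of the group action coincide. -/

import Mathlib

/-!
Since `exp(f) = 1 + f + f²·(…)` with `f = ψ(a)`, every generator `f m` of `[M, L]` differs from the
generator `m - exp(f) m` of `[M, exp(L)]` by an element of `[M, _2 L]`, and in general
`[M, _(i+1) L] ≤ [M, exp(L)] + [M, _(i+2) L]`. Iterating up to the nilpotency length `d` gives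
`[M, L] ≤ [M, exp(L)]`. Conversely `m - exp(f) m = -∑_{k ≥ 1} f^k m / k!` lies in `[M, L]`.
-/

attribute [local instance 100] LieRing.ofAssociativeRing

/-- Truncated exponential `∑_{k<p} f^k/k!` of an endomorphism of a `ℤ_[p]`-module. -/
noncomputable def texp (p : ℕ) [Fact p.Prime] {M : Type*} [AddCommGroup M] [Module ℤ_[p] M]
    (f : Module.End ℤ_[p] M) : Module.End ℤ_[p] M :=
  ∑ k ∈ Finset.range p, Ring.inverse ((k.factorial : ℤ_[p])) • f ^ k

/-- Truncated logarithm `∑_{1≤k≤p-1} (-1)^{k+1}(g-1)^k/k`. -/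
noncomputable def tlog (p : ℕ) [Fact p.Prime] {M : Type*} [AddCommGroup M] [Module ℤ_[p] M]
    (g : Module.End ℤ_[p] M) : Module.End ℤ_[p] M :=
  ∑ k ∈ Finset.Icc 1 (p - 1), ((-1 : ℤ_[p]) ^ (k + 1) * Ring.inverse ((k : ℤ_[p]))) • (g - 1) ^ k


/-- `[U, L] = Span{a·m : m ∈ U, a ∈ L}`. -/
noncomputable def lieBr (p : ℕ) [Fact p.Prime] {M L : Type*} [AddCommGroup M] [Module ℤ_[p] M]
    [LieRing L] [LieAlgebra ℤ_[p] L]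
    (ψ : L →ₗ⁅ℤ_[p]⁆ Module.End ℤ_[p] M) (U : Submodule ℤ_[p] M) : Submodule ℤ_[p] M :=
  Submodule.span ℤ_[p] {x | ∃ a : L, ∃ m ∈ U, x = ψ a m}

/-- Iterated `[M, _i L]`, with `[M, _0 L] = M`. -/
noncomputable def lieIter (p : ℕ) [Fact p.Prime] {M L : Type*} [AddCommGroup M] [Module ℤ_[p] M]
    [LieRing L] [LieAlgebra ℤ_[p] L]
    (ψ : L →ₗ⁅ℤ_[p]⁆ Module.End ℤ_[p] M) : ℕ → Submodule ℤ_[p] M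
  | 0 => ⊤
  | (i+1) => lieBr p ψ (lieIter p ψ i)


/-- `[U, exp(L)] = Span{m - exp(ψ(a))·m : m ∈ U, a ∈ L}`. -/
noncomputable def expBr (p : ℕ) [Fact p.Prime] {M L : Type*} [AddCommGroup M] [Module ℤ_[p] M]
    [LieRing L] [LieAlgebra ℤ_[p] L]
    (ψ : L →ₗ⁅ℤ_[p]⁆ Module.End ℤ_[p] M) (U : Submodule ℤ_[p] M) : Submodule ℤ_[p] M :=
  Submodule.span ℤ_[p] {x | ∃ a : L, ∃ m ∈ U, x = m - texp p (ψ a) m}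

/-- Iterated `[M, _i exp(L)]`. -/
noncomputable def expIter (p : ℕ) [Fact p.Prime] {M L : Type*} [AddCommGroup M] [Module ℤ_[p] M]
    [LieRing L] [LieAlgebra ℤ_[p] L]
    (ψ : L →ₗ⁅ℤ_[p]⁆ Module.End ℤ_[p] M) : ℕ → Submodule ℤ_[p] M
  | 0 => ⊤
  | (i+1) => expBr p ψ (expIter p ψ i)

open Finset

section
variable {p : ℕ} [Fact p.Prime] {M L : Type*} [AddCommGroup M] [Module ℤ_[p] M]

lemma texp_eq_one_add_sum_Ico (f : Module.End ℤ_[p] M) :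
    texp p f = 1 + ∑ k ∈ Ico 1 p, Ring.inverse (k.factorial : ℤ_[p]) • f ^ k := by
  rw [texp, ← sum_range_add_sum_Ico _ (Fact.out : p.Prime).one_le]
  simp

lemma texp_eq_one_add_add_sum_Ico (f : Module.End ℤ_[p] M) :
    texp p f = 1 + f + ∑ k ∈ Ico 2 p, Ring.inverse (k.factorial : ℤ_[p]) • f ^ k := by
  rw [texp, ← sum_range_add_sum_Ico _ (Fact.out : p.Prime).two_le]
  simp [sum_range_succ]

variable [LieRing L] [LieAlgebra ℤ_[p] L] (ψ : L →ₗ⁅ℤ_[p]⁆ Module.End ℤ_[p] M)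

lemma lieBr_mono {U V : Submodule ℤ_[p] M} (h : U ≤ V) : lieBr p ψ U ≤ lieBr p ψ V :=
  Submodule.span_mono (by rintro x ⟨a, m, hm, rfl⟩; exact ⟨a, m, h hm, rfl⟩)

lemma lieIter_antitone : Antitone (lieIter p ψ) := by
  refine antitone_nat_of_succ_le fun i ↦ ?_
  induction i with
  | zero => exact le_top
  | succ i ih => exact lieBr_mono ψ ih

lemma apply_mem_lieIter_succ (a : L) {i : ℕ} {m : M} (hm : m ∈ lieIter p ψ i) :
    ψ a m ∈ lieIter p ψ (i + 1) :=
  Submodule.subset_span ⟨a, m, hm, rfl⟩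

lemma pow_apply_mem_lieIter (a : L) (k : ℕ) {i : ℕ} {m : M} (hm : m ∈ lieIter p ψ i) :
    (ψ a ^ k) m ∈ lieIter p ψ (i + k) := by
  induction k with
  | zero => simpa using hm
  | succ k ih =>
    rw [pow_succ', Module.End.mul_apply]
    exact apply_mem_lieIter_succ ψ a ih

lemma sum_Ico_smul_pow_apply_mem_lieIter (a : L) (c : ℕ → ℤ_[p]) (n : ℕ) {i : ℕ} {m : M}
    (hm : m ∈ lieIter p ψ i) :
    ∑ k ∈ Ico n p, c k • (ψ a ^ k) m ∈ lieIter p ψ (i + n) :=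
  Submodule.sum_mem _ fun k hk ↦ Submodule.smul_mem _ _ <|
    lieIter_antitone ψ (by simp at hk; omega) (pow_apply_mem_lieIter ψ a k hm)

lemma expBr_top_le_lieBr_top : expBr p ψ ⊤ ≤ lieBr p ψ ⊤ := by
  refine Submodule.span_le.mpr ?_
  rintro _ ⟨a, m, -, rfl⟩
  have htail : ∑ k ∈ Ico 1 p, Ring.inverse (k.factorial : ℤ_[p]) • (ψ a ^ k) m ∈ lieIter p ψ 1 :=
    sum_Ico_smul_pow_apply_mem_lieIter ψ a _ 1 (i := 0) Submodule.mem_top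
  rw [SetLike.mem_coe, texp_eq_one_add_sum_Ico, LinearMap.add_apply, LinearMap.sum_apply,
    Module.End.one_apply, sub_add_cancel_left]
  simp only [LinearMap.smul_apply]
  exact Submodule.neg_mem _ htail

lemma lieIter_succ_le_expBr_top_sup (i : ℕ) :
    lieIter p ψ (i + 1) ≤ expBr p ψ ⊤ ⊔ lieIter p ψ (i + 2) := by
  refine Submodule.span_le.mpr ?_
  rintro _ ⟨a, m, hm, rfl⟩
  have hexp : m - texp p (ψ a) m ∈ expBr p ψ ⊤ := Submodule.subset_span ⟨a, m, trivial, rfl⟩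
  have htail := sum_Ico_smul_pow_apply_mem_lieIter ψ a (fun k ↦ Ring.inverse (k.factorial : ℤ_[p]))
    2 hm
  have hsplit : ψ a m = -(m - texp p (ψ a) m) -
      ∑ k ∈ Ico 2 p, Ring.inverse (k.factorial : ℤ_[p]) • (ψ a ^ k) m := by
    rw [texp_eq_one_add_add_sum_Ico, LinearMap.add_apply, LinearMap.add_apply,
      LinearMap.sum_apply, Module.End.one_apply]
    simp only [LinearMap.smul_apply]
    abel
  rw [SetLike.mem_coe, hsplit]
  exact Submodule.sub_mem _ (Submodule.mem_sup_left (Submodule.neg_mem _ hexp))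
    (Submodule.mem_sup_right htail)

lemma lieIter_one_le_expBr_top_sup (k : ℕ) :
    lieIter p ψ 1 ≤ expBr p ψ ⊤ ⊔ lieIter p ψ (k + 1) := by
  induction k with
  | zero => exact le_sup_right
  | succ k ih =>
    calc lieIter p ψ 1 ≤ expBr p ψ ⊤ ⊔ lieIter p ψ (k + 1) := ih
      _ ≤ expBr p ψ ⊤ ⊔ (expBr p ψ ⊤ ⊔ lieIter p ψ (k + 2)) :=
        sup_le_sup_left (lieIter_succ_le_expBr_top_sup ψ k) _
      _ = expBr p ψ ⊤ ⊔ lieIter p ψ (k + 2) := by rw [← sup_assoc, sup_idem]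

end

theorem stmt11_general {p : ℕ} [Fact p.Prime] {M L : Type*} [AddCommGroup M] [Module ℤ_[p] M]
    [LieRing L] [LieAlgebra ℤ_[p] L] (ψ : L →ₗ⁅ℤ_[p]⁆ Module.End ℤ_[p] M)
    (d : ℕ) (h : lieIter p ψ d = ⊥) :
    lieBr p ψ ⊤ = expBr p ψ ⊤ := by
  refine le_antisymm ?_ (expBr_top_le_lieBr_top ψ)
  calc lieBr p ψ ⊤ = lieIter p ψ 1 := rfl
    _ ≤ expBr p ψ ⊤ ⊔ lieIter p ψ (d + 1) := lieIter_one_le_expBr_top_sup ψ d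
    _ ≤ expBr p ψ ⊤ ⊔ lieIter p ψ d := sup_le_sup_left (lieIter_antitone ψ d.le_succ) _
    _ = expBr p ψ ⊤ := by rw [h, sup_bot_eq]

/-- For a Lie action of length `d < p`, the coinvariant submodules agree:
`[M, L] = Span{ψ(a)m}` equals `[M, exp(L)] = Span{m - exp(ψ(a))m}`, hence
`H₀(L, M) = M/[M,L] = M/[M, exp(L)] = H₀(exp(L), M)`. -/
theorem stmt11 {p : ℕ} [Fact p.Prime] {M L : Type*} [AddCommGroup M] [Module ℤ_[p] M]
    [LieRing L] [LieAlgebra ℤ_[p] L] (ψ : L →ₗ⁅ℤ_[p]⁆ Module.End ℤ_[p] M)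
    (d : ℕ) (hd : d < p) (h : lieIter p ψ d = ⊥) :
    lieBr p ψ ⊤ = expBr p ψ ⊤ :=
  stmt11_general ψ d h
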